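/- arXiv:1903.02091 — 4 statements merged into one kernel-verified Lean document; each statement's English description precedes it below -/
import Mathlib

section
/- For R, Rc in SO(3), define the attitude error function Ψ(R, Rc) = (1/2) tr(I - Rc^T R) and the attitude error vector e_R = (1/2)(Rc^T R - R^T Rc)^∨. Then (1/2)‖e_R‖^2 ≤ Ψ(R, Rc), and if Ψ(R, Rc) ≤ ψ1 < 2, then Ψ(R, Rc) ≤ (1/(2 - ψ1))‖e_R‖^2. -/
/-!
Everything depends only on the relative rotation `Q = Rcᵀ R`, with `Ψ = (3 - tr Q) / 2`.
For a rotation, `adj Q = Qᵀ`; comparing diagonals expresses each `Q i i` as a cofactor, and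
together with the unit norm of the columns this gives the identity `‖e_R‖² = Ψ (2 - Ψ)`.
Since the diagonal entries of an orthogonal matrix are at most `1`, `0 ≤ Ψ`, and both
inequalities are elementary consequences of that identity.
-/

open Matrix

/-- Euclidean norm of a vector in `ℝ³`. -/
noncomputable def enorm3 (x : Fin 3 → ℝ) : ℝ := Real.sqrt (∑ i, x i ^ 2)

/-- The vee map, inverse of the hat map `x ↦ x̂` with `x̂ y = x × y`. -/
def vee (M : Matrix (Fin 3) (Fin 3) ℝ) : Fin 3 → ℝ := ![M 2 1, M 0 2, M 1 0]

noncomputable def attitudeErrorFunction (Q : Matrix (Fin 3) (Fin 3) ℝ) : ℝ :=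
  (1 / 2) * ((1 : Matrix (Fin 3) (Fin 3) ℝ) - Q).trace

noncomputable def attitudeErrorVector (Q : Matrix (Fin 3) (Fin 3) ℝ) : Fin 3 → ℝ :=
  (1 / 2 : ℝ) • vee (Q - Qᵀ)

lemma enorm3_sq (x : Fin 3 → ℝ) : enorm3 x ^ 2 = ∑ i, x i ^ 2 :=
  Real.sq_sqrt (by positivity)

lemma Matrix.adjugate_eq_transpose_of_transpose_mul_self_eq_one {n R : Type*} [Fintype n]
    [DecidableEq n] [CommRing R] {Q : Matrix n n R} (hQ : Qᵀ * Q = 1) (hdet : Q.det = 1) :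
    Q.adjugate = Qᵀ :=
  Matrix.right_inv_eq_right_inv (by rw [mul_adjugate, hdet, one_smul]) (mul_eq_one_comm.mp hQ)

lemma Matrix.diag_le_one_of_transpose_mul_self_eq_one {n : Type*} [Fintype n] [DecidableEq n]
    {Q : Matrix n n ℝ} (hQ : Qᵀ * Q = 1) (i : n) : Q i i ≤ 1 := by
  have hcol : ∑ k, Q k i ^ 2 = 1 := by
    simpa [mul_apply, sq] using congrFun (congrFun hQ i) i
  have hii : Q i i ^ 2 ≤ 1 :=
    hcol ▸ Finset.single_le_sum (f := fun k => Q k i ^ 2) (fun _ _ => sq_nonneg _)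
      (Finset.mem_univ i)
  nlinarith

section Rotation

variable {Q : Matrix (Fin 3) (Fin 3) ℝ} (hQ : Qᵀ * Q = 1) (hdet : Q.det = 1)
include hQ

lemma attitudeErrorFunction_nonneg : 0 ≤ attitudeErrorFunction Q := by
  have := diag_le_one_of_transpose_mul_self_eq_one hQ
  simp only [attitudeErrorFunction, trace_fin_three, Matrix.sub_apply, one_apply_eq]
  linarith [this 0, this 1, this 2]

include hdet

lemma enorm3_sq_attitudeErrorVector :
    enorm3 (attitudeErrorVector Q) ^ 2
      = attitudeErrorFunction Q * (2 - attitudeErrorFunction Q) := by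
  have hcol (i : Fin 3) := congrFun (congrFun hQ i) i
  have hcof (i : Fin 3) := congrFun (congrFun
    (adjugate_eq_transpose_of_transpose_mul_self_eq_one hQ hdet) i) i
  have h0 := hcol 0; have h1 := hcol 1; have h2 := hcol 2
  have c0 := hcof 0; have c1 := hcof 1; have c2 := hcof 2
  simp only [mul_apply, Fin.sum_univ_three, transpose_apply, one_apply_eq,
    adjugate_fin_three, of_apply, cons_val', cons_val_zero, cons_val_one, cons_val_two,
    empty_val', cons_val_fin_one, tail_cons, vecHead] at h0 h1 h2 c0 c1 c2
  simp only [enorm3_sq, attitudeErrorFunction, attitudeErrorVector, vee, trace_fin_three,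
    Fin.sum_univ_three, Pi.smul_apply, Matrix.sub_apply, transpose_apply, one_apply_eq,
    smul_eq_mul, cons_val_zero, cons_val_one, cons_val_two, head_cons, tail_cons]
  linear_combination (1 / 4 : ℝ) * (h0 + h1 + h2) + (1 / 2 : ℝ) * (c0 + c1 + c2)

lemma half_enorm3_sq_attitudeErrorVector_le :
    (1 / 2) * enorm3 (attitudeErrorVector Q) ^ 2 ≤ attitudeErrorFunction Q := by
  rw [enorm3_sq_attitudeErrorVector hQ hdet]
  nlinarith [attitudeErrorFunction_nonneg hQ]

lemma attitudeErrorFunction_le_of_le {ψ1 : ℝ} (hΨ : attitudeErrorFunction Q ≤ ψ1)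
    (hψ1 : ψ1 < 2) :
    attitudeErrorFunction Q ≤ (1 / (2 - ψ1)) * enorm3 (attitudeErrorVector Q) ^ 2 := by
  rw [enorm3_sq_attitudeErrorVector hQ hdet, one_div_mul_eq_div, le_div_iff₀ (by linarith)]
  nlinarith [attitudeErrorFunction_nonneg hQ]

end Rotation

/-- For rotation matrices `R, Rc`, with `Ψ = (1/2) tr(I - RcᵀR)` and
`e_R = (1/2)(RcᵀR - RᵀRc)^∨`: `(1/2)‖e_R‖² ≤ Ψ`, and if `Ψ ≤ ψ1 < 2` then
`Ψ ≤ (1/(2-ψ1))‖e_R‖²`. -/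
theorem stmt3 (R Rc : Matrix (Fin 3) (Fin 3) ℝ)
    (hR : Rᵀ * R = 1) (hRdet : R.det = 1) (hRc : Rcᵀ * Rc = 1) (hRcdet : Rc.det = 1)
    (ψ1 : ℝ) :
    let Ψ : ℝ := (1 / 2) * ((1 : Matrix (Fin 3) (Fin 3) ℝ) - Rcᵀ * R).trace
    let eR : Fin 3 → ℝ := (1 / 2 : ℝ) • vee (Rcᵀ * R - Rᵀ * Rc)
    (1 / 2) * enorm3 eR ^ 2 ≤ Ψ ∧
      (Ψ ≤ ψ1 → ψ1 < 2 → Ψ ≤ (1 / (2 - ψ1)) * enorm3 eR ^ 2) := by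
  intro Ψ eR
  have hQ : (Rcᵀ * R)ᵀ * (Rcᵀ * R) = 1 := by
    rw [transpose_mul, transpose_transpose, Matrix.mul_assoc, ← Matrix.mul_assoc Rc,
      mul_eq_one_comm.mp hRc, Matrix.one_mul, hR]
  have hdet : (Rcᵀ * R).det = 1 := by
    rw [det_mul, det_transpose, hRdet, hRcdet, mul_one]
  have heR : eR = attitudeErrorVector (Rcᵀ * R) := by
    rw [attitudeErrorVector, transpose_mul, transpose_transpose]
  rw [heR]
  exact ⟨half_enorm3_sq_attitudeErrorVector_le hQ hdet,
    attitudeErrorFunction_le_of_le hQ hdet⟩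
end

section
/- For any R, Rc in SO(3), the operator norm (induced 2-norm) of the matrix C(Rc^T R) = (1/2)(tr(R^T Rc) I - R^T Rc) is at most 1. -/
open Matrix

/-- Euclidean norm of a vector in `ℝ³`. -/
noncomputable def enorm (x : Fin 3 → ℝ) : ℝ := Real.sqrt (∑ i, x i ^ 2)

/-!
Put `E = Rᵀ Rc ∈ SO(3)` and `t = tr E`. Then `2 C v = t v - E v`, and as `E` is an isometry
`‖t v - E v‖² = t² ‖v‖² - 2 t ⟪v, E v⟫ + ‖v‖²`, which is at most `4 ‖v‖²` once we know
`|⟪v, E v⟫| ≤ ‖v‖²`, `-1 ≤ t ≤ 3` and `(t - 1) ‖v‖² ≤ 2 ⟪v, E v⟫`.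

For a rotation by `θ` about a unit axis `u`, `K = adj(1 - E) = (1 - t) 1 + E + Eᵀ` equals
`2 (1 - cos θ) u uᵀ`. Avoiding axis-angle coordinates, Cayley–Hamilton gives the formula for `K`,
and `det (1 - E) = 0` (odd dimension) gives `K² = (3 - t) K` and `det K = 0`. So `K` is positive
semidefinite, which is the last inequality, and its quadratic form vanishes at a nonzero vector,
which forces `t ≥ -1`.
-/

namespace Matrix

section CommRing

variable {R : Type*} [CommRing R]

theorem adjugate_smul_one_sub_fin_three (E : Matrix (Fin 3) (Fin 3) R) (x : R) :
    adjugate (x • 1 - E) = (x ^ 2 - x * E.trace) • 1 + x • E + adjugate E := by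
  ext i j
  fin_cases i <;> fin_cases j <;>
    simp [adjugate_fin_three, trace_fin_three] <;> ring

variable {n : Type*} [Fintype n] [DecidableEq n] {E : Matrix n n R}

theorem dotProduct_mulVec_self_of_mem_orthogonalGroup (hE : E ∈ orthogonalGroup n R)
    (v : n → R) : (E *ᵥ v) ⬝ᵥ (E *ᵥ v) = v ⬝ᵥ v := by
  rw [dotProduct_mulVec, ← vecMul_transpose, vecMul_vecMul, (mem_orthogonalGroup_iff' _ _).1 hE,
    vecMul_one]

theorem adjugate_eq_transpose_of_mem_specialOrthogonalGroup
    (hE : E ∈ specialOrthogonalGroup n R) : adjugate E = Eᵀ := by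
  rw [← inv_eq_left_inv ((mem_orthogonalGroup_iff' _ _).1 hE.1), inv_def,
    (mem_specialOrthogonalGroup_iff.1 hE).2, Ring.inverse_one, one_smul]

theorem det_one_sub_eq_zero_of_mem_specialOrthogonalGroup [NoZeroDivisors R] [CharZero R]
    (hn : Odd (Fintype.card n)) (hE : E ∈ specialOrthogonalGroup n R) : det (1 - E) = 0 := by
  have h : 1 - E = -((1 - E)ᵀ * E) := by
    rw [transpose_sub, transpose_one, sub_mul, (mem_orthogonalGroup_iff' _ _).1 hE.1, one_mul]
    abel
  rw [← CharZero.eq_neg_self_iff]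
  conv_lhs => rw [h]
  rw [det_neg, det_mul, det_transpose, (mem_specialOrthogonalGroup_iff.1 hE).2,
    hn.neg_one_pow]
  ring

end CommRing

section Rotation

variable {R : Type*} [CommRing R] {E : Matrix (Fin 3) (Fin 3) R}

theorem adjugate_one_sub_of_mem_specialOrthogonalGroup
    (hE : E ∈ specialOrthogonalGroup (Fin 3) R) :
    adjugate (1 - E) = (1 - E.trace) • 1 + E + Eᵀ := by
  simpa [adjugate_eq_transpose_of_mem_specialOrthogonalGroup hE] using
    adjugate_smul_one_sub_fin_three E 1

theorem transpose_adjugate_one_sub_of_mem_specialOrthogonalGroup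
    (hE : E ∈ specialOrthogonalGroup (Fin 3) R) :
    (adjugate (1 - E))ᵀ = adjugate (1 - E) := by
  rw [adjugate_one_sub_of_mem_specialOrthogonalGroup hE]
  simp only [transpose_add, transpose_smul, transpose_one, transpose_transpose]
  abel

theorem dotProduct_adjugate_one_sub_mulVec_of_mem_specialOrthogonalGroup
    (hE : E ∈ specialOrthogonalGroup (Fin 3) R) (v : Fin 3 → R) :
    v ⬝ᵥ (adjugate (1 - E) *ᵥ v) = (1 - E.trace) * (v ⬝ᵥ v) + 2 * (v ⬝ᵥ (E *ᵥ v)) := by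
  rw [adjugate_one_sub_of_mem_specialOrthogonalGroup hE, add_mulVec, add_mulVec, smul_mulVec,
    one_mulVec, dotProduct_add, dotProduct_add, dotProduct_smul, dotProduct_transpose_mulVec,
    smul_eq_mul]
  ring

theorem adjugate_one_sub_mul_self_of_mem_specialOrthogonalGroup [NoZeroDivisors R]
    [CharZero R] (hE : E ∈ specialOrthogonalGroup (Fin 3) R) :
    adjugate (1 - E) * adjugate (1 - E) = (3 - E.trace) • adjugate (1 - E) := by
  have hformula := adjugate_one_sub_of_mem_specialOrthogonalGroup hE
  have hsymm := transpose_adjugate_one_sub_of_mem_specialOrthogonalGroup hE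
  have hdet : det (1 - E) = 0 :=
    det_one_sub_eq_zero_of_mem_specialOrthogonalGroup (by decide) hE
  have hKA : adjugate (1 - E) * (1 - E) = 0 := by rw [adjugate_mul, hdet, zero_smul]
  have hAK : (1 - E) * adjugate (1 - E) = 0 := by rw [mul_adjugate, hdet, zero_smul]
  set K := adjugate (1 - E)
  have hKAt : K * (1 - E)ᵀ = 0 := by rw [← hsymm, ← transpose_mul, hAK, transpose_zero]
  calc K * K = K * ((3 - E.trace) • 1 - (1 - E) - (1 - E)ᵀ) := by
        congr 1; rw [hformula, transpose_sub, transpose_one]; module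
    _ = (3 - E.trace) • K := by rw [mul_sub, mul_sub, hKA, hKAt, mul_smul_comm, mul_one]; abel

end Rotation

section Ordered

variable {R : Type*} [CommRing R] [LinearOrder R] [IsStrictOrderedRing R]

theorem dotProduct_self_nonneg {n : Type*} [Fintype n] (v : n → R) : 0 ≤ v ⬝ᵥ v :=
  Finset.sum_nonneg fun i _ => mul_self_nonneg (v i)

theorem abs_dotProduct_mulVec_le_of_mem_orthogonalGroup {n : Type*} [Fintype n] [DecidableEq n]
    {E : Matrix n n R} (hE : E ∈ orthogonalGroup n R) (v : n → R) :
    |v ⬝ᵥ (E *ᵥ v)| ≤ v ⬝ᵥ v := by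
  have hEv := dotProduct_mulVec_self_of_mem_orthogonalGroup hE v
  have hadd : 0 ≤ (v + E *ᵥ v) ⬝ᵥ (v + E *ᵥ v) := dotProduct_self_nonneg _
  have hsub : 0 ≤ (v - E *ᵥ v) ⬝ᵥ (v - E *ᵥ v) := dotProduct_self_nonneg _
  simp only [add_dotProduct, dotProduct_add, sub_dotProduct, dotProduct_sub, hEv,
    dotProduct_comm (E *ᵥ v) v] at hadd hsub
  rw [abs_le]
  constructor <;> linarith

theorem trace_le_card_of_mem_orthogonalGroup {n : Type*} [Fintype n] [DecidableEq n]
    {E : Matrix n n R} (hE : E ∈ orthogonalGroup n R) : E.trace ≤ Fintype.card n := by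
  have hdiag (i : n) : E i i ≤ 1 := by
    simpa using (abs_le.1 (abs_dotProduct_mulVec_le_of_mem_orthogonalGroup hE (Pi.single i 1))).2
  simpa [trace] using Finset.sum_le_sum fun i (_ : i ∈ Finset.univ) => hdiag i

variable {E : Matrix (Fin 3) (Fin 3) R}

theorem dotProduct_adjugate_one_sub_mulVec_nonneg_of_mem_specialOrthogonalGroup
    (hE : E ∈ specialOrthogonalGroup (Fin 3) R) (v : Fin 3 → R) :
    0 ≤ v ⬝ᵥ (adjugate (1 - E) *ᵥ v) := by
  have hsq : (3 - E.trace) * (v ⬝ᵥ (adjugate (1 - E) *ᵥ v)) =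
      (adjugate (1 - E) *ᵥ v) ⬝ᵥ (adjugate (1 - E) *ᵥ v) := by
    rw [← smul_eq_mul, ← dotProduct_smul, ← smul_mulVec,
      ← adjugate_one_sub_mul_self_of_mem_specialOrthogonalGroup hE, ← mulVec_mulVec,
      dotProduct_mulVec, ← mulVec_transpose,
      transpose_adjugate_one_sub_of_mem_specialOrthogonalGroup hE]
  rcases (trace_le_card_of_mem_orthogonalGroup hE.1).lt_or_eq with hlt | heq
  · refine nonneg_of_mul_nonneg_right (hsq.symm ▸ dotProduct_self_nonneg _) ?_
    simp only [Fintype.card_fin, Nat.cast_ofNat] at hlt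
    linarith
  · simp only [Fintype.card_fin, Nat.cast_ofNat] at heq
    rw [heq, sub_self, zero_mul, eq_comm, dotProduct_self_eq_zero] at hsq
    rw [hsq, dotProduct_zero]

theorem neg_one_le_trace_of_mem_specialOrthogonalGroup
    (hE : E ∈ specialOrthogonalGroup (Fin 3) R) : -1 ≤ E.trace := by
  obtain ⟨v, hv, hKv⟩ : ∃ v ≠ 0, adjugate (1 - E) *ᵥ v = 0 := by
    rw [exists_mulVec_eq_zero_iff, det_adjugate,
      det_one_sub_eq_zero_of_mem_specialOrthogonalGroup (by decide) hE]
    norm_num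
  have hform := dotProduct_adjugate_one_sub_mulVec_of_mem_specialOrthogonalGroup hE v
  rw [hKv, dotProduct_zero] at hform
  have hN : 0 < v ⬝ᵥ v :=
    (dotProduct_self_nonneg v).lt_of_ne' (dotProduct_self_eq_zero.not.2 hv)
  have hq := neg_abs_le (v ⬝ᵥ (E *ᵥ v))
  have hCS := abs_dotProduct_mulVec_le_of_mem_orthogonalGroup hE.1 v
  nlinarith

theorem dotProduct_trace_smul_sub_mulVec_le_of_mem_specialOrthogonalGroup
    (hE : E ∈ specialOrthogonalGroup (Fin 3) R) (v : Fin 3 → R) :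
    (E.trace • v - E *ᵥ v) ⬝ᵥ (E.trace • v - E *ᵥ v) ≤ 4 * (v ⬝ᵥ v) := by
  have hN := dotProduct_self_nonneg v
  have hq := abs_le.1 (abs_dotProduct_mulVec_le_of_mem_orthogonalGroup hE.1 v)
  have hX := dotProduct_adjugate_one_sub_mulVec_nonneg_of_mem_specialOrthogonalGroup hE v
  rw [dotProduct_adjugate_one_sub_mulVec_of_mem_specialOrthogonalGroup hE] at hX
  have ht_le : E.trace ≤ 3 := by
    simpa using trace_le_card_of_mem_orthogonalGroup hE.1
  have ht_ge := neg_one_le_trace_of_mem_specialOrthogonalGroup hE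
  have hexpand : (E.trace • v - E *ᵥ v) ⬝ᵥ (E.trace • v - E *ᵥ v) =
      E.trace ^ 2 * (v ⬝ᵥ v) - 2 * E.trace * (v ⬝ᵥ (E *ᵥ v)) + v ⬝ᵥ v := by
    simp only [sub_dotProduct, dotProduct_sub, smul_dotProduct, dotProduct_smul, smul_eq_mul,
      dotProduct_mulVec_self_of_mem_orthogonalGroup hE.1, dotProduct_comm (E *ᵥ v) v]
    ring
  rw [hexpand]
  rcases le_or_gt 0 E.trace with ht0 | ht0
  · nlinarith [mul_nonneg ht0 hX, mul_nonneg (sub_nonneg.2 ht_le) hN]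
  · nlinarith [mul_nonneg (neg_nonneg.2 ht0.le) (sub_nonneg.2 hq.2),
      mul_nonneg (mul_nonneg (sub_nonneg.2 ht_le) (neg_le_iff_add_nonneg.1 ht_ge)) hN]

end Ordered

end Matrix

/-- For `R, Rc ∈ SO(3)`, the induced 2-norm of `C(RcᵀR) = (1/2)(tr(RᵀRc) I - RᵀRc)`
is at most 1, i.e. `‖C v‖ ≤ ‖v‖` for every `v`. -/
theorem stmt6 (R Rc : Matrix (Fin 3) (Fin 3) ℝ)
    (hR : Rᵀ * R = 1) (hRdet : R.det = 1) (hRc : Rcᵀ * Rc = 1) (hRcdet : Rc.det = 1) :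
    let C : Matrix (Fin 3) (Fin 3) ℝ :=
      (1 / 2 : ℝ) • ((Rᵀ * Rc).trace • (1 : Matrix (Fin 3) (Fin 3) ℝ) - Rᵀ * Rc)
    ∀ v : Fin 3 → ℝ, _root_.enorm (C.mulVec v) ≤ _root_.enorm v := by
  intro C v
  have hRt : Rᵀ ∈ specialOrthogonalGroup (Fin 3) ℝ := mem_specialOrthogonalGroup_iff.2
    ⟨(mem_orthogonalGroup_iff _ _).2 (by rwa [transpose_transpose]), by rwa [det_transpose]⟩
  have hRc' : Rc ∈ specialOrthogonalGroup (Fin 3) ℝ :=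
    mem_specialOrthogonalGroup_iff.2 ⟨(mem_orthogonalGroup_iff' _ _).2 hRc, hRcdet⟩
  have hCv : C *ᵥ v = (1 / 2 : ℝ) • ((Rᵀ * Rc).trace • v - (Rᵀ * Rc) *ᵥ v) := by
    simp only [C, smul_mulVec, sub_mulVec, one_mulVec]
  have henorm (x : Fin 3 → ℝ) : _root_.enorm x = √(x ⬝ᵥ x) := by
    simp only [_root_.enorm, dotProduct, sq]
  rw [henorm, henorm, hCv, smul_dotProduct, dotProduct_smul, smul_eq_mul, smul_eq_mul]
  gcongr
  have hE : Rᵀ * Rc ∈ specialOrthogonalGroup (Fin 3) ℝ := mul_mem hRt hRc'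
  nlinarith [dotProduct_trace_smul_sub_mulVec_le_of_mem_specialOrthogonalGroup hE v]
end

section
/- Let W, W̄, V, V̄ be matrices with ‖W‖ ≤ W_M, ‖V‖ ≤ V_M (Frobenius norms), and set W̃ = W - W̄, Ṽ = V - V̄. Let x be a vector, z = V^T x, z̄ = V̄^T x, z̃ = Ṽ^T x. Suppose σ: R^n → R^{n+1} satisfies ‖σ(·)‖∞ ≤ 1 and its Jacobian satisfies ‖σ'(·)‖ ≤ 1/4 componentwise. Then the quantity w = -W̃^T σ'(z̄) z - W^T (σ(z) - σ(z̄) - σ'(z̄) z̃) - ε, with ‖ε‖ ≤ ε_N, satisfies ‖w‖ ≤ C1 + C2 ‖Z̃‖ (1 + ‖x‖), where Z̃ = diag(W̃, Ṽ), C1 = 2 W_M + ε_N, and C2 = (1/4)(V_M + W_M). -/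
/-!
With `z̃ = z - z̄`, the residual is `-W̃ᵀ σ'(z̄) z - Wᵀ r - ε`, where `r` is the first-order Taylor
remainder of `σ` at `z̄`. Since `0 ≤ ς' ≤ 1/4`, the Jacobian `σ'(z̄)` shrinks vectors by `1/4`, and
each coordinate of `r` is at most `|z̃ᵢ|/4`. Combined with `‖Mᵀx‖ ≤ ‖M‖ ‖x‖` for the Frobenius norm
and `‖W̃‖, ‖Ṽ‖ ≤ ‖Z̃‖`, this gives `‖w‖ ≤ ε_N + (1/4)(V_M + W_M) ‖Z̃‖ ‖x‖`.
-/

open Matrix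

/-- Euclidean norm of a vector. -/
noncomputable def euclNorm {ι : Type*} [Fintype ι] (x : ι → ℝ) : ℝ := Real.sqrt (∑ i, x i ^ 2)

/-- Frobenius norm of a matrix. -/
noncomputable def fnorm {ι κ : Type*} [Fintype ι] [Fintype κ] (M : Matrix ι κ ℝ) : ℝ :=
  Real.sqrt (∑ i, ∑ j, M i j ^ 2)

/-- Scalar sigmoid `ς(s) = 1/(1 + e^{-s})`. -/
noncomputable def sigmoid (s : ℝ) : ℝ := 1 / (1 + Real.exp (-s))

/-- Vector sigmoid activation `σ(z) = [1, ς(z₁), …, ς(z_n)]`. -/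
noncomputable def sigvec {n : ℕ} (z : Fin n → ℝ) : Fin (n + 1) → ℝ :=
  Fin.cons 1 (fun i => sigmoid (z i))

/-- Jacobian `σ'(z)` of the vector sigmoid. -/
noncomputable def sigjac {n : ℕ} (z : Fin n → ℝ) : Matrix (Fin (n + 1)) (Fin n) ℝ :=
  Matrix.of fun i j => Fin.cases 0 (fun k => if k = j then deriv sigmoid (z j) else 0) i

open scoped Matrix.Norms.Frobenius
open WithLp

section
variable {ι κ : Type*} [Fintype ι] [Fintype κ]

lemma euclNorm_eq_norm (x : ι → ℝ) : euclNorm x = ‖toLp 2 x‖ := by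
  simp [euclNorm, EuclideanSpace.norm_eq]

lemma fnorm_eq_norm (M : Matrix ι κ ℝ) : fnorm M = ‖M‖ := by
  simp [fnorm, frobenius_norm_def, Real.sqrt_eq_rpow]

end

section
variable {𝕜 : Type*} [RCLike 𝕜] {m n : Type*} [Fintype m] [Fintype n]

lemma Matrix.frobenius_norm_mulVec_le (A : Matrix m n 𝕜) (v : n → 𝕜) :
    ‖toLp 2 (A *ᵥ v)‖ ≤ ‖A‖ * ‖toLp 2 v‖ := by
  simpa only [← replicateCol_mulVec, frobenius_norm_replicateCol] using
    frobenius_norm_mul A (replicateCol Unit v)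

lemma Matrix.frobenius_norm_transpose_mulVec_le (A : Matrix n m 𝕜) (v : n → 𝕜) :
    ‖toLp 2 (Aᵀ *ᵥ v)‖ ≤ ‖A‖ * ‖toLp 2 v‖ :=
  A.frobenius_norm_transpose ▸ Aᵀ.frobenius_norm_mulVec_le v

end

section
variable {α : Type*} [SeminormedAddCommGroup α] {l m n o : Type*}
  [Fintype l] [Fintype m] [Fintype n] [Fintype o]

lemma Matrix.frobenius_norm_fromBlocks_zero_sq (A : Matrix m n α) (B : Matrix l o α) :
    ‖fromBlocks A 0 0 B‖ ^ 2 = ‖A‖ ^ 2 + ‖B‖ ^ 2 := by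
  simp only [frobenius_norm_def, ← Real.sqrt_eq_rpow, Real.rpow_two]
  rw [Real.sq_sqrt (by positivity), Real.sq_sqrt (by positivity), Real.sq_sqrt (by positivity)]
  simp [Fintype.sum_sum_type]

lemma Matrix.frobenius_norm_le_fromBlocks_left (A : Matrix m n α) (B : Matrix l o α) :
    ‖A‖ ≤ ‖fromBlocks A 0 0 B‖ :=
  le_of_sq_le_sq
    (by rw [frobenius_norm_fromBlocks_zero_sq]; exact le_add_of_nonneg_right (sq_nonneg _))
    (norm_nonneg _)

lemma Matrix.frobenius_norm_le_fromBlocks_right (A : Matrix m n α) (B : Matrix l o α) :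
    ‖B‖ ≤ ‖fromBlocks A 0 0 B‖ :=
  le_of_sq_le_sq
    (by rw [frobenius_norm_fromBlocks_zero_sq]; exact le_add_of_nonneg_left (sq_nonneg _))
    (norm_nonneg _)

end

section
variable {𝕜 : Type*} [RCLike 𝕜] {ι : Type*} [Fintype ι]

lemma norm_toLp_le_mul_of_norm_apply_le {x y : ι → 𝕜} {c : ℝ} (hc : 0 ≤ c)
    (h : ∀ i, ‖x i‖ ≤ c * ‖y i‖) : ‖toLp 2 x‖ ≤ c * ‖toLp 2 y‖ := by
  rw [← abs_of_nonneg hc, ← Real.norm_eq_abs, ← norm_smul, ← toLp_smul,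
    EuclideanSpace.norm_eq, EuclideanSpace.norm_eq]
  gcongr with i
  simpa [norm_smul, abs_of_nonneg hc] using h i

lemma norm_toLp_cons_zero {n : ℕ} (x : Fin n → 𝕜) :
    ‖toLp 2 (Fin.cons 0 x : Fin (n + 1) → 𝕜)‖ = ‖toLp 2 x‖ := by
  simp [EuclideanSpace.norm_eq, Fin.sum_univ_succ]

end

/-- Mean value inequality for `t ↦ f t - f'(b) t`, whose derivative lies in `[-L, L]`. -/
lemma abs_sub_sub_deriv_mul_le {f : ℝ → ℝ} {L : ℝ} (hf : Differentiable ℝ f)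
    (hf' : ∀ t, deriv f t ∈ Set.Icc 0 L) (a b : ℝ) :
    |f a - f b - deriv f b * (a - b)| ≤ L * |a - b| := by
  have hg : ∀ t, HasDerivAt (fun t => f t - deriv f b * t) (deriv f t - deriv f b) t := fun t => by
    simpa using (hf t).hasDerivAt.fun_sub ((hasDerivAt_id t).const_mul (deriv f b))
  have hg' : ∀ t, ‖deriv f t - deriv f b‖ ≤ L := fun t => by
    obtain ⟨ht0, htL⟩ := hf' t
    obtain ⟨hb0, hbL⟩ := hf' b
    rw [Real.norm_eq_abs, abs_le]
    constructor <;> linarith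
  have hmvt := Convex.norm_image_sub_le_of_norm_hasDerivWithin_le
    (fun t _ => (hg t).hasDerivWithinAt) (fun t _ => hg' t) convex_univ
    (Set.mem_univ b) (Set.mem_univ a)
  rw [Real.norm_eq_abs, Real.norm_eq_abs] at hmvt
  convert hmvt using 2
  ring

lemma sigmoid_eq_real_sigmoid : sigmoid = Real.sigmoid := by
  funext s; simp [sigmoid, Real.sigmoid_def]

lemma deriv_sigmoid_mem_Icc (s : ℝ) : deriv sigmoid s ∈ Set.Icc 0 (1 / 4) := by
  have h0 := Real.sigmoid_pos s
  have h1 := Real.sigmoid_lt_one s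
  rw [sigmoid_eq_real_sigmoid, Real.deriv_sigmoid]
  constructor <;> nlinarith [sq_nonneg (Real.sigmoid s - 1 / 2)]

lemma abs_sigmoid_sub_sub_le (a b : ℝ) :
    |sigmoid a - sigmoid b - deriv sigmoid b * (a - b)| ≤ 1 / 4 * |a - b| :=
  abs_sub_sub_deriv_mul_le (sigmoid_eq_real_sigmoid ▸ differentiable_sigmoid)
    deriv_sigmoid_mem_Icc a b

lemma sigjac_mulVec {n : ℕ} (b v : Fin n → ℝ) :
    sigjac b *ᵥ v = Fin.cons 0 fun k => deriv sigmoid (b k) * v k := by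
  funext i
  refine Fin.cases ?_ (fun k => ?_) i
  · simp [mulVec, dotProduct, sigjac]
  · simp [mulVec, dotProduct, sigjac, ite_mul]

lemma norm_sigjac_mulVec_le {n : ℕ} (b v : Fin n → ℝ) :
    ‖toLp 2 (sigjac b *ᵥ v)‖ ≤ 1 / 4 * ‖toLp 2 v‖ := by
  rw [sigjac_mulVec, norm_toLp_cons_zero]
  refine norm_toLp_le_mul_of_norm_apply_le (by norm_num) fun k => ?_
  obtain ⟨h0, h1⟩ := deriv_sigmoid_mem_Icc (b k)
  rw [norm_mul, Real.norm_of_nonneg h0]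
  exact mul_le_mul_of_nonneg_right h1 (norm_nonneg _)

lemma sigvec_sub_sub_sigjac_mulVec {n : ℕ} (a b : Fin n → ℝ) :
    sigvec a - sigvec b - sigjac b *ᵥ (a - b) =
      Fin.cons 0 fun k => sigmoid (a k) - sigmoid (b k) - deriv sigmoid (b k) * (a k - b k) := by
  rw [sigjac_mulVec]
  funext i
  refine Fin.cases ?_ (fun k => ?_) i <;> simp [sigvec]

lemma norm_sigvec_sub_sub_sigjac_mulVec_le {n : ℕ} (a b : Fin n → ℝ) :
    ‖toLp 2 (sigvec a - sigvec b - sigjac b *ᵥ (a - b))‖ ≤ 1 / 4 * ‖toLp 2 (a - b)‖ := by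
  rw [sigvec_sub_sub_sigjac_mulVec, norm_toLp_cons_zero]
  exact norm_toLp_le_mul_of_norm_apply_le (by norm_num) fun k => abs_sigmoid_sub_sub_le (a k) (b k)

/-- Bound on the neural-network approximation residual: with `W̃ = W - W̄`, `Ṽ = V - V̄`,
`z = Vᵀx`, `z̄ = V̄ᵀx`, `z̃ = Ṽᵀx`, and
`w = -W̃ᵀ σ'(z̄) z - Wᵀ(σ(z) - σ(z̄) - σ'(z̄) z̃) - ε` with `‖ε‖ ≤ ε_N`, one has
`‖w‖ ≤ C₁ + C₂ ‖Z̃‖ (1 + ‖x‖)` for `Z̃ = diag(W̃, Ṽ)`, `C₁ = 2W_M + ε_N`,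
`C₂ = (1/4)(V_M + W_M)`. -/
theorem stmt9 {n p q : ℕ}
    (W Wbar : Matrix (Fin (n + 1)) (Fin q) ℝ) (V Vbar : Matrix (Fin p) (Fin n) ℝ)
    (x : Fin p → ℝ) (ε : Fin q → ℝ) (W_M V_M ε_N : ℝ)
    (hW : fnorm W ≤ W_M) (hV : fnorm V ≤ V_M) (hε : euclNorm ε ≤ ε_N) :
    let Wt := W - Wbar
    let Vt := V - Vbar
    let z := Vᵀ.mulVec x
    let zbar := Vbarᵀ.mulVec x
    let zt := Vtᵀ.mulVec x
    let w : Fin q → ℝ :=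
      -(Wtᵀ.mulVec ((sigjac zbar).mulVec z))
        - Wᵀ.mulVec (sigvec z - sigvec zbar - (sigjac zbar).mulVec zt) - ε
    let Zt := Matrix.fromBlocks Wt 0 0 Vt
    euclNorm w ≤ (2 * W_M + ε_N) + (1 / 4) * (V_M + W_M) * fnorm Zt * (1 + euclNorm x) := by
  intro Wt Vt z zbar zt w Zt
  simp only [euclNorm_eq_norm, fnorm_eq_norm] at hW hV hε ⊢
  have hW0 : 0 ≤ W_M := (norm_nonneg W).trans hW
  have hzt : zt = z - zbar := by simp only [zt, Vt, z, zbar, transpose_sub, sub_mulVec]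
  have hz : ‖toLp 2 z‖ ≤ V_M * ‖toLp 2 x‖ :=
    (frobenius_norm_transpose_mulVec_le V x).trans (by gcongr)
  have hzt_le : ‖toLp 2 (z - zbar)‖ ≤ ‖Zt‖ * ‖toLp 2 x‖ :=
    hzt ▸ (frobenius_norm_transpose_mulVec_le Vt x).trans
      (by gcongr; exact frobenius_norm_le_fromBlocks_right Wt Vt)
  have hA : ‖toLp 2 (Wtᵀ *ᵥ (sigjac zbar *ᵥ z))‖ ≤ ‖Zt‖ * (1 / 4 * (V_M * ‖toLp 2 x‖)) := by
    refine (frobenius_norm_transpose_mulVec_le _ _).trans ?_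
    gcongr
    · exact frobenius_norm_le_fromBlocks_left Wt Vt
    · exact (norm_sigjac_mulVec_le _ _).trans (by gcongr)
  have hB : ‖toLp 2 (Wᵀ *ᵥ (sigvec z - sigvec zbar - sigjac zbar *ᵥ zt))‖ ≤
      W_M * (1 / 4 * (‖Zt‖ * ‖toLp 2 x‖)) := by
    refine (frobenius_norm_transpose_mulVec_le _ _).trans ?_
    gcongr
    rw [hzt]
    exact (norm_sigvec_sub_sub_sigjac_mulVec_le z zbar).trans (by gcongr)
  calc ‖toLp 2 w‖
      ≤ ‖toLp 2 (Wtᵀ *ᵥ (sigjac zbar *ᵥ z))‖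
        + ‖toLp 2 (Wᵀ *ᵥ (sigvec z - sigvec zbar - sigjac zbar *ᵥ zt))‖ + ‖toLp 2 ε‖ := by
        simp only [w, toLp_sub, toLp_neg]
        exact (norm_sub_le _ _).trans
          (by gcongr; exact (norm_sub_le _ _).trans_eq (by rw [norm_neg]))
    _ ≤ ‖Zt‖ * (1 / 4 * (V_M * ‖toLp 2 x‖)) + W_M * (1 / 4 * (‖Zt‖ * ‖toLp 2 x‖)) + ε_N := by
        gcongr
    _ ≤ _ := by
        nlinarith [norm_nonneg Zt, norm_nonneg (toLp 2 x), mul_nonneg hW0 (norm_nonneg Zt),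
          mul_nonneg ((norm_nonneg V).trans hV) (norm_nonneg Zt)]
end

section
/- Let A in R^3 satisfy ‖A‖ ≤ k_x ‖e_x‖ + k_v ‖e_v‖ + B1 for nonnegative constants k_x, k_v, B1 and vectors e_x, e_v. Let R, Rc in SO(3) with b3 = R e_3, b3c = Rc e_3 = -A/‖A‖, e_3^T Rc^T R e_3 > 0, and suppose ‖(e_3^T Rc^T R e_3) R e_3 - Rc e_3‖ ≤ β. Define X = (f/(e_3^T Rc^T R e_3))((e_3^T Rc^T R e_3) R e_3 - Rc e_3) with f = -A^T R e_3. Then ‖X‖ ≤ (k_x ‖e_x‖ + k_v ‖e_v‖ + B1) β. -/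
/-! Since `Rc e₃ = -A/‖A‖`, the scalar `c = e₃ᵀRcᵀRe₃ = (Rc e₃)·(R e₃)` equals `f/‖A‖`. Hence
`X = ‖A‖ (c Re₃ - Rc e₃)`, and the bound is the product of the bounds on the two factors. -/

open Matrix

lemma enorm3_eq_norm (x : Fin 3 → ℝ) :
    enorm3 x = ‖(WithLp.toLp 2 x : EuclideanSpace ℝ (Fin 3))‖ := by
  simp [enorm3, EuclideanSpace.norm_eq]

lemma enorm3_nonneg (x : Fin 3 → ℝ) : 0 ≤ enorm3 x := Real.sqrt_nonneg _

lemma enorm3_smul (c : ℝ) (x : Fin 3 → ℝ) : enorm3 (c • x) = |c| * enorm3 x := by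
  simp only [enorm3_eq_norm, WithLp.toLp_smul, norm_smul, Real.norm_eq_abs]

lemma Matrix.dotProduct_transpose_mul_mulVec {n R : Type*} [Fintype n] [CommSemiring R]
    (M N : Matrix n n R) (v : n → R) : v ⬝ᵥ (Mᵀ * N) *ᵥ v = M *ᵥ v ⬝ᵥ N *ᵥ v := by
  rw [← mulVec_mulVec, dotProduct_mulVec, vecMul_transpose]

lemma neg_dotProduct_div_eq_of_eq_neg_inv_smul {n K : Type*} [Fintype n] [Field K]
    {a : K} {A b r : n → K} (hb : b = -a⁻¹ • A) (hbr : b ⬝ᵥ r ≠ 0) :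
    -(A ⬝ᵥ r) / (b ⬝ᵥ r) = a := by
  have hbr_eq : b ⬝ᵥ r = -a⁻¹ * (A ⬝ᵥ r) := by rw [hb, smul_dotProduct, smul_eq_mul]
  have ha : a ≠ 0 := by
    rintro rfl
    simp [hbr_eq] at hbr
  rw [hbr_eq] at hbr ⊢
  have hAr : A ⬝ᵥ r ≠ 0 := right_ne_zero_of_mul hbr
  field_simp

theorem stmt16_general (A e_x e_v : Fin 3 → ℝ) (k_x k_v B1 β : ℝ)
    (hA : enorm3 A ≤ k_x * enorm3 e_x + k_v * enorm3 e_v + B1)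
    (R Rc : Matrix (Fin 3) (Fin 3) ℝ)
    (hb3c : Rc.mulVec ![0, 0, 1] = -(enorm3 A)⁻¹ • A)
    (hpos : 0 < ![0, 0, 1] ⬝ᵥ (Rcᵀ * R).mulVec ![0, 0, 1])
    (hβ : enorm3 ((![0, 0, 1] ⬝ᵥ (Rcᵀ * R).mulVec ![0, 0, 1]) • R.mulVec ![0, 0, 1]
            - Rc.mulVec ![0, 0, 1]) ≤ β) :
    let f : ℝ := -(A ⬝ᵥ R.mulVec ![0, 0, 1])
    let X : Fin 3 → ℝ := (f / (![0, 0, 1] ⬝ᵥ (Rcᵀ * R).mulVec ![0, 0, 1])) •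
      ((![0, 0, 1] ⬝ᵥ (Rcᵀ * R).mulVec ![0, 0, 1]) • R.mulVec ![0, 0, 1]
        - Rc.mulVec ![0, 0, 1])
    enorm3 X ≤ (k_x * enorm3 e_x + k_v * enorm3 e_v + B1) * β := by
  intro f X
  rw [dotProduct_transpose_mul_mulVec] at hpos
  have hf : f / (![0, 0, 1] ⬝ᵥ (Rcᵀ * R).mulVec ![0, 0, 1]) = enorm3 A := by
    rw [dotProduct_transpose_mul_mulVec]
    exact neg_dotProduct_div_eq_of_eq_neg_inv_smul hb3c hpos.ne'
  calc enorm3 X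
      = enorm3 A * enorm3 ((![0, 0, 1] ⬝ᵥ (Rcᵀ * R).mulVec ![0, 0, 1]) • R.mulVec ![0, 0, 1]
          - Rc.mulVec ![0, 0, 1]) := by
        rw [enorm3_smul, hf, abs_of_nonneg (enorm3_nonneg A)]
    _ ≤ (k_x * enorm3 e_x + k_v * enorm3 e_v + B1) * β :=
        mul_le_mul hA hβ (enorm3_nonneg _) ((enorm3_nonneg A).trans hA)

/-- Bound on the thrust-direction mismatch term: with `‖A‖ ≤ k_x‖e_x‖ + k_v‖e_v‖ + B1`,
`Rc e₃ = -A/‖A‖`, `e₃ᵀRcᵀRe₃ > 0`, `‖(e₃ᵀRcᵀRe₃) Re₃ - Rc e₃‖ ≤ β`,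
`f = -AᵀRe₃`, and `X = (f/(e₃ᵀRcᵀRe₃))((e₃ᵀRcᵀRe₃) Re₃ - Rc e₃)`, one has
`‖X‖ ≤ (k_x‖e_x‖ + k_v‖e_v‖ + B1) β`. -/
theorem stmt16 (A e_x e_v : Fin 3 → ℝ) (k_x k_v B1 β : ℝ)
    (hkx : 0 ≤ k_x) (hkv : 0 ≤ k_v) (hB1 : 0 ≤ B1)
    (hA : enorm3 A ≤ k_x * enorm3 e_x + k_v * enorm3 e_v + B1)
    (R Rc : Matrix (Fin 3) (Fin 3) ℝ)
    (hR : Rᵀ * R = 1) (hRdet : R.det = 1) (hRc : Rcᵀ * Rc = 1) (hRcdet : Rc.det = 1)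
    (hb3c : Rc.mulVec ![0, 0, 1] = -(enorm3 A)⁻¹ • A)
    (hpos : 0 < ![0, 0, 1] ⬝ᵥ (Rcᵀ * R).mulVec ![0, 0, 1])
    (hβ : enorm3 ((![0, 0, 1] ⬝ᵥ (Rcᵀ * R).mulVec ![0, 0, 1]) • R.mulVec ![0, 0, 1]
            - Rc.mulVec ![0, 0, 1]) ≤ β) :
    let f : ℝ := -(A ⬝ᵥ R.mulVec ![0, 0, 1])
    let X : Fin 3 → ℝ := (f / (![0, 0, 1] ⬝ᵥ (Rcᵀ * R).mulVec ![0, 0, 1])) •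
      ((![0, 0, 1] ⬝ᵥ (Rcᵀ * R).mulVec ![0, 0, 1]) • R.mulVec ![0, 0, 1]
        - Rc.mulVec ![0, 0, 1])
    enorm3 X ≤ (k_x * enorm3 e_x + k_v * enorm3 e_v + B1) * β :=
  stmt16_general A e_x e_v k_x k_v B1 β hA R Rc hb3c hpos hβ
end
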